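/- For all integers p, r ≥ 1 there exists a constant C (depending on p and r) such that for all n, every simple graph G on n vertices that admits a proper edge-coloring with no rainbow copy of the double star S_{p,r} contains at most C·n copies of S_{p,r}. (Upper bound of the Proposition on double stars: ex(n, S_{p,r}, rainbow-S_{p,r}) = O(n).) -/

import Mathlib

open SimpleGraph

/-- A proper edge-coloring: distinct edges of `G` sharing a vertex get different colors. -/
def IsProperEdgeColoring {V β : Type*} (G : SimpleGraph V) (c : Sym2 V → β) : Prop :=
  ∀ e₁ ∈ G.edgeSet, ∀ e₂ ∈ G.edgeSet, e₁ ≠ e₂ → (∃ v, v ∈ e₁ ∧ v ∈ e₂) → c e₁ ≠ c e₂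

/-- `G`, with edge-coloring `c`, contains a rainbow copy of `H`:
a subgraph isomorphic to `H` all of whose edges get pairwise distinct colors. -/
def HasRainbowCopy {V W β : Type*} (G : SimpleGraph V) (c : Sym2 V → β)
    (H : SimpleGraph W) : Prop :=
  ∃ A : G.Subgraph, Nonempty (A.coe ≃g H) ∧ Set.InjOn c A.edgeSet

/-- The number of copies of `H` in `G`, i.e. the number of subgraphs of `G`
isomorphic to `H`. -/
noncomputable def copyCount {V W : Type*} (G : SimpleGraph V) (H : SimpleGraph W) : ℕ :=
  Set.ncard {A : G.Subgraph | Nonempty (A.coe ≃g H)}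
/-- The double star S_{p,r}: an edge uv together with p leaves adjacent to u
and r leaves adjacent to v. -/
def doubleStar (p r : ℕ) : SimpleGraph (Fin 2 ⊕ (Fin p ⊕ Fin r)) :=
  SimpleGraph.fromRel (fun a b =>
    (a = Sum.inl 0 ∧ b = Sum.inl 1) ∨
    (a = Sum.inl 0 ∧ ∃ i, b = Sum.inr (Sum.inl i)) ∨
    (a = Sum.inl 1 ∧ ∃ j, b = Sum.inr (Sum.inr j)))

/-!
Let `u`, `v` be the centers of a copy of `S_{p,r}`, with `p` leaves `a i` at `u`. If
`deg v ≥ 2p + r + 1`, keep the leaves `a i` and pick `r` new leaves at `v` outside `u`, the `a i`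
and the at most `p` neighbours `w` of `v` whose edge `vw` repeats a color `col (u, a i)` (at most
one per color, by properness at `v`). Properness already separates any two edges sharing a
vertex, so the new copy is rainbow; symmetrically at `u`. Hence, without rainbow copies,
`deg u ≤ p + 2r` and `deg v ≤ 2p + r` for every copy, and a labelled copy is fixed by `u` and
then by choices among the neighbours of `u` and `v`: at most `n (p + 2r)^(p+1) (2p + r)^r`
copies.
-/

section

variable {V W β : Type*} {G : SimpleGraph V} {H : SimpleGraph W} {col : Sym2 V → β}

theorem copyCount_le_natCard_copy [Finite V] [Finite W] :
    _root_.copyCount G H ≤ Nat.card (Copy H G) := by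
  have : Finite (Copy H G) := Finite.of_injective _ DFunLike.coe_injective
  have hrange :
      {A : G.Subgraph | Nonempty (A.coe ≃g H)} = Set.range (Copy.toSubgraph (A := H)) := by
    rw [Copy.range_toSubgraph]
    exact Set.ext fun A => ⟨fun ⟨e⟩ => ⟨e.symm⟩, fun ⟨e⟩ => ⟨e.symm⟩⟩
  rw [_root_.copyCount, hrange, ← Nat.card_coe_set_eq]
  exact Finite.card_range_le _

theorem IsProperEdgeColoring.eq_of_mem_of_mem (hc : IsProperEdgeColoring G col)
    {e e' : Sym2 V} (he : e ∈ G.edgeSet) (he' : e' ∈ G.edgeSet) {x : V} (hx : x ∈ e)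
    (hx' : x ∈ e') (h : col e = col e') : e = e' := by
  by_contra hne
  exact hc e he e' he' hne ⟨x, hx, hx'⟩ h

theorem IsProperEdgeColoring.eq_of_adj_of_adj (hc : IsProperEdgeColoring G col) {x y z : V}
    (hy : G.Adj x y) (hz : G.Adj x z) (h : col s(x, y) = col s(x, z)) : y = z := by
  have := hc.eq_of_mem_of_mem hy hz (Sym2.mem_mk_left x y) (Sym2.mem_mk_left x z) h
  exact (Sym2.eq_iff.1 this).elim And.right fun h => absurd h.2 hy.ne'

theorem hasRainbowCopy_of_copy (hc : IsProperEdgeColoring G col) (f : Copy H G)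
    (hf : ∀ e ∈ H.edgeSet, ∀ e' ∈ H.edgeSet, (∀ x ∈ e, x ∉ e') →
      col (e.map f) ≠ col (e'.map f)) :
    HasRainbowCopy G col H := by
  refine ⟨f.toSubgraph, ⟨f.isoToSubgraph.symm⟩, ?_⟩
  rw [Subgraph.edgeSet_map, Subgraph.edgeSet_top]
  rintro _ ⟨e, he, rfl⟩ _ ⟨e', he', rfl⟩ hcol
  have hmem : ∀ {e}, e ∈ H.edgeSet → e.map f ∈ G.edgeSet := fun he => by
    simpa using f.toHom.map_mem_edgeSet he
  by_cases hdisj : ∀ x ∈ e, x ∉ e'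
  · exact absurd hcol (hf e he e' he' hdisj)
  · obtain ⟨x, hx, hx'⟩ := not_forall₂.1 hdisj
    exact hc.eq_of_mem_of_mem (hmem he) (hmem he') (Sym2.mem_map.2 ⟨x, hx, rfl⟩)
      (Sym2.mem_map.2 ⟨x, not_not.1 hx', rfl⟩) hcol

theorem Finset.exists_injective_mem_of_le_card (s : Finset V) {k : ℕ} (h : k ≤ s.card) :
    ∃ g : Fin k → V, Function.Injective g ∧ ∀ i, g i ∈ s :=
  ⟨fun i => s.equivFin.symm (Fin.castLE h i),
    fun _ _ hij => Fin.castLE_injective h (s.equivFin.symm.injective (Subtype.ext hij)),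
    fun _ => (s.equivFin.symm _).2⟩

variable {p r : ℕ}

theorem mem_edgeSet_doubleStar {e : Sym2 (Fin 2 ⊕ (Fin p ⊕ Fin r))} :
    e ∈ (doubleStar p r).edgeSet ↔ e = s(.inl 0, .inl 1) ∨
      (∃ i, e = s(.inl 0, .inr (.inl i))) ∨ ∃ j, e = s(.inl 1, .inr (.inr j)) := by
  induction e using Sym2.ind with
  | _ x y =>
  simp only [mem_edgeSet, doubleStar, fromRel_adj, Sym2.eq_iff]
  constructor
  · rintro ⟨-, (⟨rfl, rfl⟩ | ⟨rfl, i, rfl⟩ | ⟨rfl, j, rfl⟩) |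
      (⟨rfl, rfl⟩ | ⟨rfl, i, rfl⟩ | ⟨rfl, j, rfl⟩)⟩ <;> simp
  · rintro ((⟨rfl, rfl⟩ | ⟨rfl, rfl⟩) | ⟨i, (⟨rfl, rfl⟩ | ⟨rfl, rfl⟩)⟩ |
      ⟨j, (⟨rfl, rfl⟩ | ⟨rfl, rfl⟩)⟩) <;> simp

theorem hasRainbowCopy_doubleStar (hc : IsProperEdgeColoring G col) {u v : V} {a : Fin p → V}
    {b : Fin r → V} (huv : G.Adj u v) (hua : ∀ i, G.Adj u (a i)) (hvb : ∀ j, G.Adj v (b j))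
    (ha : Function.Injective a) (hb : Function.Injective b) (hav : ∀ i, a i ≠ v)
    (hbu : ∀ j, b j ≠ u) (hab : ∀ i j, a i ≠ b j) (hcol : ∀ i j, col s(u, a i) ≠ col s(v, b j)) :
    HasRainbowCopy G col (doubleStar p r) := by
  set f : Fin 2 ⊕ (Fin p ⊕ Fin r) → V := Sum.elim ![u, v] (Sum.elim a b)
  have hmap : ∀ {e}, e ∈ (doubleStar p r).edgeSet → e.map f ∈ G.edgeSet := by
    intro e he
    rcases mem_edgeSet_doubleStar.1 he with rfl | ⟨i, rfl⟩ | ⟨j, rfl⟩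
    exacts [huv, hua i, hvb j]
  have hinj : Function.Injective f := by
    refine (injective_pair_iff_ne.2 huv.ne).sumElim (ha.sumElim hb hab) ?_
    rintro k (i | j) <;> fin_cases k
    exacts [(hua i).ne, (hav i).symm, (hbu j).symm, (hvb j).ne]
  let F : Copy (doubleStar p r) G :=
    ⟨⟨f, fun {x y} h => by simpa using hmap (e := s(x, y)) h⟩, hinj⟩
  refine hasRainbowCopy_of_copy hc F fun e he e' he' hdisj => ?_
  rcases mem_edgeSet_doubleStar.1 he with rfl | ⟨i, rfl⟩ | ⟨j, rfl⟩ <;>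
    rcases mem_edgeSet_doubleStar.1 he' with rfl | ⟨i', rfl⟩ | ⟨j', rfl⟩ <;>
    simp at hdisj
  · exact hcol i j'
  · exact (hcol i' j).symm

theorem exists_injective_neighbors_avoiding (hc : IsProperEdgeColoring G col) {v : V}
    [Fintype (G.neighborSet v)] (u : V) (a : Fin p → V) (hdeg : 2 * p + r + 1 ≤ G.degree v) :
    ∃ b : Fin r → V, Function.Injective b ∧
      ∀ j, G.Adj v (b j) ∧ b j ≠ u ∧ ∀ i, a i ≠ b j ∧ col s(u, a i) ≠ col s(v, b j) := by
  classical
  set clash := Finset.univ.biUnion fun i =>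
    (G.neighborFinset v).filter fun w => col s(v, w) = col s(u, a i)
  have hclash : clash.card ≤ p := by
    have := Finset.card_biUnion_le_card_mul Finset.univ
      (fun i => (G.neighborFinset v).filter fun w => col s(v, w) = col s(u, a i)) 1 fun i _ =>
        Finset.card_le_one.2 fun w hw w' hw' => by
          simp only [Finset.mem_filter, mem_neighborFinset] at hw hw'
          exact hc.eq_of_adj_of_adj hw.1 hw'.1 (hw.2.trans hw'.2.symm)
    simpa using this
  set bad := insert u (Finset.univ.image a ∪ clash)
  have hbad : bad.card ≤ 2 * p + 1 := by
    have h₁ : bad.card ≤ (Finset.univ.image a ∪ clash).card + 1 := Finset.card_insert_le _ _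
    have h₂ := Finset.card_union_le (Finset.univ.image a) clash
    have h₃ : (Finset.univ.image a).card ≤ p := Finset.card_image_le.trans_eq (by simp)
    omega
  have hroom : r ≤ (G.neighborFinset v \ bad).card := by
    have := Finset.le_card_sdiff bad (G.neighborFinset v)
    rw [card_neighborFinset_eq_degree] at this
    omega
  obtain ⟨b, hb, hbmem⟩ := Finset.exists_injective_mem_of_le_card _ hroom
  refine ⟨b, hb, fun j => ?_⟩
  obtain ⟨hadj, hne, hnotin, hnclash⟩ : G.Adj v (b j) ∧ b j ≠ u ∧ (∀ i, a i ≠ b j) ∧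
      (G.Adj v (b j) → ∀ i, col s(v, b j) ≠ col s(u, a i)) := by
    simpa [bad, clash] using hbmem j
  exact ⟨hadj, hne, fun i => ⟨hnotin i, (hnclash hadj i).symm⟩⟩

theorem degree_centers_le_of_not_hasRainbowCopy [G.LocallyFinite]
    (hc : IsProperEdgeColoring G col) (hnr : ¬ HasRainbowCopy G col (doubleStar p r))
    (f : Copy (doubleStar p r) G) :
    G.degree (f (.inl 0)) ≤ p + 2 * r ∧ G.degree (f (.inl 1)) ≤ 2 * p + r := by
  have hadj : ∀ {x y}, (doubleStar p r).Adj x y → G.Adj (f x) (f y) := f.toHom.map_adj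
  have hne : ∀ {x y}, x ≠ y → f x ≠ f y := f.injective.ne
  have huv : G.Adj (f (.inl 0)) (f (.inl 1)) := hadj (by simp [doubleStar])
  have hua : ∀ i, G.Adj (f (.inl 0)) (f (.inr (.inl i))) := fun i => hadj (by simp [doubleStar])
  have hvb : ∀ j, G.Adj (f (.inl 1)) (f (.inr (.inr j))) := fun j => hadj (by simp [doubleStar])
  have ha : Function.Injective fun i => f (.inr (.inl i)) := fun i i' h => by
    simpa using f.injective h
  have hb : Function.Injective fun j => f (.inr (.inr j)) := fun j j' h => by
    simpa using f.injective h
  constructor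
  · by_contra! hdeg
    obtain ⟨a, ha', hnew⟩ := exists_injective_neighbors_avoiding hc (f (.inl 1))
      (fun j => f (.inr (.inr j))) (v := f (.inl 0)) (p := r) (r := p) (by omega)
    exact hnr (hasRainbowCopy_doubleStar hc huv (fun i => (hnew i).1) hvb ha' hb
      (fun i => (hnew i).2.1) (fun j => hne (by simp)) (fun i j => ((hnew i).2.2 j).1.symm)
      (fun i j => ((hnew i).2.2 j).2.symm))
  · by_contra! hdeg
    obtain ⟨b, hb', hnew⟩ := exists_injective_neighbors_avoiding hc (f (.inl 0))
      (fun i => f (.inr (.inl i))) (v := f (.inl 1)) (r := r) (by omega)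
    exact hnr (hasRainbowCopy_doubleStar hc huv hua (fun j => (hnew j).1) ha hb'
      (fun i => hne (by simp)) (fun j => (hnew j).2.1) (fun i j => ((hnew j).2.2 i).1)
      (fun i j => ((hnew j).2.2 i).2))

theorem natCard_copy_doubleStar_le [Fintype V] [DecidableRel G.Adj] {K L : ℕ}
    (hdeg : ∀ f : Copy (doubleStar p r) G,
      G.degree (f (.inl 0)) ≤ K ∧ G.degree (f (.inl 1)) ≤ L) :
    Nat.card (Copy (doubleStar p r) G) ≤ Fintype.card V * (K ^ (p + 1) * L ^ r) := by
  classical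
  let slots (u v : V) : Fin 2 ⊕ (Fin p ⊕ Fin r) → Finset V :=
    Sum.elim ![{u}, {v}] (Sum.elim (fun _ => G.neighborFinset u) (fun _ => G.neighborFinset v))
  let T := ({u | G.degree u ≤ K} : Finset V).biUnion fun u =>
    ((G.neighborFinset u).filter (G.degree · ≤ L)).biUnion fun v => Fintype.piFinset (slots u v)
  have hmem : ∀ f : Copy (doubleStar p r) G, ⇑f ∈ T := by
    intro f
    have hadj : ∀ {x y}, (doubleStar p r).Adj x y → G.Adj (f x) (f y) := f.toHom.map_adj
    simp only [T, Finset.mem_biUnion, Finset.mem_filter, Finset.mem_univ, true_and,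
      mem_neighborFinset, Fintype.mem_piFinset]
    refine ⟨f (.inl 0), (hdeg f).1, f (.inl 1), ⟨hadj (by simp [doubleStar]), (hdeg f).2⟩, ?_⟩
    rintro (k | i | j)
    · fin_cases k <;> simp [slots]
    · simpa [slots] using hadj (by simp [doubleStar])
    · simpa [slots] using hadj (by simp [doubleStar])
  have hslots : ∀ u, G.degree u ≤ K → ∀ v, G.degree v ≤ L →
      (Fintype.piFinset (slots u v)).card ≤ K ^ p * L ^ r := fun u hu v hv => by
    simp only [Fintype.card_piFinset, Fintype.prod_sum_type, slots, Sum.elim_inl, Sum.elim_inr,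
      Fin.prod_univ_two, Matrix.cons_val_zero, Matrix.cons_val_one, Finset.card_singleton,
      Finset.prod_const, Finset.card_univ, Fintype.card_fin, card_neighborFinset_eq_degree, one_mul]
    exact Nat.mul_le_mul (Nat.pow_le_pow_left hu p) (Nat.pow_le_pow_left hv r)
  have hcard : T.card ≤ Fintype.card V * (K ^ (p + 1) * L ^ r) := by
    refine (Finset.card_biUnion_le_card_mul _ _ _ fun u hu => ?_).trans
      (Nat.mul_le_mul_right _ (Finset.card_le_univ _))
    simp only [Finset.mem_filter, Finset.mem_univ, true_and] at hu
    refine (Finset.card_biUnion_le_card_mul _ _ _ fun v hv => hslots u hu v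
      (Finset.mem_filter.1 hv).2).trans ?_
    calc _ ≤ K * (K ^ p * L ^ r) := Nat.mul_le_mul_right _
          ((Finset.card_filter_le _ _).trans (card_neighborFinset_eq_degree G u ▸ hu))
      _ = K ^ (p + 1) * L ^ r := by ring
  calc Nat.card (Copy (doubleStar p r) G) ≤ Nat.card T :=
        Nat.card_le_card_of_injective (fun f => ⟨f, hmem f⟩)
          fun f g h => DFunLike.coe_injective (congrArg Subtype.val h)
    _ = T.card := Nat.card_eq_finsetCard T
    _ ≤ _ := hcard

end

theorem double_star_rainbow_upper_general (p r : ℕ) :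
    ∃ C : ℝ, ∀ (n : ℕ) (G : SimpleGraph (Fin n)) (β : Type*) (col : Sym2 (Fin n) → β),
      IsProperEdgeColoring G col → ¬ HasRainbowCopy G col (doubleStar p r) →
      (_root_.copyCount G (doubleStar p r) : ℝ) ≤ C * (n : ℝ) := by
  refine ⟨((p + 2 * r) ^ (p + 1) * (2 * p + r) ^ r : ℕ), fun n G β col hc hnr => ?_⟩
  classical
  have hcount := copyCount_le_natCard_copy.trans
    (natCard_copy_doubleStar_le (degree_centers_le_of_not_hasRainbowCopy hc hnr))
  rw [Fintype.card_fin, mul_comm] at hcount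
  exact_mod_cast hcount

/-- Upper bound of the proposition on double stars:
ex(n, S_{p,r}, rainbow-S_{p,r}) = O(n). -/
theorem double_star_rainbow_upper (p r : ℕ) (hp : 1 ≤ p) (hr : 1 ≤ r) :
    ∃ C : ℝ, ∀ (n : ℕ) (G : SimpleGraph (Fin n)) (β : Type*) (col : Sym2 (Fin n) → β),
      IsProperEdgeColoring G col → ¬ HasRainbowCopy G col (doubleStar p r) →
      (_root_.copyCount G (doubleStar p r) : ℝ) ≤ C * (n : ℝ) :=
  double_star_rainbow_upper_general p r
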